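/- Suppose W(L) and W(R) are subgroups of G. Then the set U = {(u,v) : u is a word in L of length n and v is a word in R of length n, for some n ≥ 1} is a subgroup of G × G, and the map G × U → G sending (g, (u,v)) ↦ u⁻¹gv is a right group action of U on G; the orbits of this action are exactly the strongly connected components of 2S(G;L,R). -/

import Mathlib

open Relation

/-- `w` is a product of a list of `n` elements of `S`. -/
def IsWord {G : Type*} [Group G] (S : Set G) (n : ℕ) (w : G) : Prop :=
  ∃ l : List G, l.length = n ∧ (∀ x ∈ l, x ∈ S) ∧ l.prod = w

/-- The set of all positive-length words in `S`. -/
def WordSet {G : Type*} [Group G] (S : Set G) : Set G :=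
  {w | ∃ n : ℕ, 0 < n ∧ IsWord S n w}

/-- Arc of the two-sided group digraph `2S(G;L,R)`. -/
def Arc {G : Type*} [Group G] (L R : Set G) (g h : G) : Prop :=
  ∃ l ∈ L, ∃ r ∈ R, h = l⁻¹ * g * r

/-- Existence of a directed path (possibly of length 0). -/
def DPath {G : Type*} [Group G] (L R : Set G) : G → G → Prop :=
  ReflTransGen (Arc L R)

/-- Weak connectivity: path ignoring directions. -/
def WeakConn {G : Type*} [Group G] (L R : Set G) : G → G → Prop :=
  ReflTransGen (fun g h => Arc L R g h ∨ Arc L R h g)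

/-- Strong connectivity of two vertices. -/
def StrongConn {G : Type*} [Group G] (L R : Set G) (g h : G) : Prop :=
  DPath L R g h ∧ DPath L R h g

/-!
A pair `(u, v)` of words of the same length `n` in `L` and `R` moves `g` to `u⁻¹ g v` along a
directed path of length `n`, and every directed path arises this way; so reachability is the
action of the monoid of such pairs. When the words in `L` and in `R` form groups, this monoid is
a group: if `u⁻¹` has length `a` then `1 = u⁻¹ u` has length `a + n`, so the length of `u⁻¹` can
be raised in steps of `a + n`, and likewise for `v⁻¹` with `b + n`; the two arithmetic
progressions meet. Reachability is then symmetric, so it coincides with strong connectivity.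
-/

section

variable {G : Type*} [Group G]

section IsWord

variable {S T : Set G}

lemma isWord_zero_iff {w : G} : IsWord S 0 w ↔ w = 1 := by
  constructor
  · rintro ⟨l, hl, -, rfl⟩
    simp [List.length_eq_zero_iff.1 hl]
  · rintro rfl
    exact ⟨[], rfl, by simp, rfl⟩

lemma isWord_succ_iff {n : ℕ} {w : G} :
    IsWord S (n + 1) w ↔ ∃ s ∈ S, ∃ w', IsWord S n w' ∧ w = s * w' := by
  constructor
  · rintro ⟨_ | ⟨s, l⟩, hl, hS, rfl⟩
    · simp at hl
    · exact ⟨s, hS s (by simp), l.prod, ⟨l, by simpa using hl, fun x hx => hS x (by simp [hx]),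
        rfl⟩, rfl⟩
  · rintro ⟨s, hs, w', ⟨l, hl, hS, rfl⟩, rfl⟩
    exact ⟨s :: l, by simp [hl], by simpa [hs] using hS, rfl⟩

lemma isWord_one_of_mem {s : G} (hs : s ∈ S) : IsWord S 1 s :=
  isWord_succ_iff.2 ⟨s, hs, 1, isWord_zero_iff.2 rfl, (mul_one s).symm⟩

lemma IsWord.mul {m n : ℕ} {u v : G} (hu : IsWord S m u) (hv : IsWord S n v) :
    IsWord S (m + n) (u * v) := by
  obtain ⟨l₁, rfl, hS₁, rfl⟩ := hu
  obtain ⟨l₂, rfl, hS₂, rfl⟩ := hv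
  exact ⟨l₁ ++ l₂, List.length_append,
    fun x hx => (List.mem_append.1 hx).elim (hS₁ x) (hS₂ x), List.prod_append⟩

lemma IsWord.add_mul_of_isWord_one {a c : ℕ} {x : G} (hx : IsWord S a x) (h1 : IsWord S c 1)
    (t : ℕ) : IsWord S (a + t * c) x := by
  induction t with
  | zero => simpa using hx
  | succ t ih => simpa [add_mul, ← add_assoc] using ih.mul h1

/-- The lengths `a + k (a + n + 1)` and `b + k' (b + n + 1)` meet at `a + (b + n) (a + n + 1)`. -/
lemma IsWord.exists_common_length {a b n : ℕ} {x y : G} (hx : IsWord S a x) (hy : IsWord T b y)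
    (hS : IsWord S (a + (n + 1)) 1) (hT : IsWord T (b + (n + 1)) 1) :
    IsWord S (a + (b + n) * (a + (n + 1))) x ∧ IsWord T (a + (b + n) * (a + (n + 1))) y := by
  refine ⟨hx.add_mul_of_isWord_one hS _, ?_⟩
  have hlen : a + (b + n) * (a + (n + 1)) = b + (a + n) * (b + (n + 1)) := by ring
  exact hlen ▸ hy.add_mul_of_isWord_one hT _

end IsWord

lemma inv_mem_wordSet_of_eq_subgroup {S : Set G}
    (hS : ∃ H : Subgroup G, WordSet S = (H : Set G)) :
    ∀ x ∈ WordSet S, x⁻¹ ∈ WordSet S := by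
  obtain ⟨H, hH⟩ := hS
  intro x hx
  rw [hH] at hx ⊢
  exact H.inv_mem hx

lemma dPath_iff_exists_isWord {L R : Set G} {g h : G} :
    DPath L R g h ↔ ∃ n u v, IsWord L n u ∧ IsWord R n v ∧ h = u⁻¹ * g * v := by
  constructor
  · intro hgh
    induction hgh with
    | refl => exact ⟨0, 1, 1, isWord_zero_iff.2 rfl, isWord_zero_iff.2 rfl, by group⟩
    | tail _ harc ih =>
      obtain ⟨n, u, v, hu, hv, rfl⟩ := ih
      obtain ⟨l, hl, r, hr, rfl⟩ := harc
      exact ⟨n + 1, u * l, v * r, hu.mul (isWord_one_of_mem hl), hv.mul (isWord_one_of_mem hr),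
        by group⟩
  · rintro ⟨n, u, v, hu, hv, rfl⟩
    induction n generalizing g u v with
    | zero =>
      rw [isWord_zero_iff.1 hu, isWord_zero_iff.1 hv, inv_one, one_mul, mul_one]
      exact ReflTransGen.refl
    | succ n ih =>
      obtain ⟨l, hl, u', hu', rfl⟩ := isWord_succ_iff.1 hu
      obtain ⟨r, hr, v', hv', rfl⟩ := isWord_succ_iff.1 hv
      have hpath := ih (g := l⁻¹ * g * r) (u := u') (v := v') hu' hv'
      rw [show (l * u')⁻¹ * g * (r * v') = u'⁻¹ * (l⁻¹ * g * r) * v' by group]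
      exact ReflTransGen.head ⟨l, hl, r, hr, rfl⟩ hpath

section WordPairs

variable {L R : Set G}

lemma exists_isWord_inv_pair (hL : ∀ x ∈ WordSet L, x⁻¹ ∈ WordSet L)
    (hR : ∀ x ∈ WordSet R, x⁻¹ ∈ WordSet R) {n : ℕ} (hn : 0 < n) {u v : G}
    (hu : IsWord L n u) (hv : IsWord R n v) :
    ∃ N, 0 < N ∧ IsWord L N u⁻¹ ∧ IsWord R N v⁻¹ := by
  obtain ⟨a, ha, hu'⟩ := hL u ⟨n, hn, hu⟩
  obtain ⟨b, -, hv'⟩ := hR v ⟨n, hn, hv⟩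
  obtain ⟨m, rfl⟩ := Nat.exists_eq_add_of_lt hn
  have hL1 : IsWord L (a + (m + 1)) 1 := by simpa using hu'.mul hu
  have hR1 : IsWord R (b + (m + 1)) 1 := by simpa using hv'.mul hv
  exact ⟨_, Nat.add_pos_left ha _, hu'.exists_common_length hv' hL1 hR1⟩

def wordPairSubgroup (hLne : L.Nonempty) (hRne : R.Nonempty)
    (hL : ∀ x ∈ WordSet L, x⁻¹ ∈ WordSet L) (hR : ∀ x ∈ WordSet R, x⁻¹ ∈ WordSet R) :
    Subgroup (G × G) where
  carrier := {p | ∃ n : ℕ, 0 < n ∧ IsWord L n p.1 ∧ IsWord R n p.2}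
  mul_mem' := by
    rintro _ _ ⟨m, hm, hu, hv⟩ ⟨n, -, hu', hv'⟩
    exact ⟨m + n, by omega, hu.mul hu', hv.mul hv'⟩
  inv_mem' := by
    rintro _ ⟨n, hn, hu, hv⟩
    exact exists_isWord_inv_pair hL hR hn hu hv
  one_mem' := by
    obtain ⟨l, hl⟩ := hLne
    obtain ⟨r, hr⟩ := hRne
    obtain ⟨N, hN, hu, hv⟩ :=
      exists_isWord_inv_pair hL hR one_pos (isWord_one_of_mem hl) (isWord_one_of_mem hr)
    exact ⟨1 + N, by omega, by simpa using (isWord_one_of_mem hl).mul hu,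
      by simpa using (isWord_one_of_mem hr).mul hv⟩

variable (hLne : L.Nonempty) (hRne : R.Nonempty)
  (hL : ∀ x ∈ WordSet L, x⁻¹ ∈ WordSet L) (hR : ∀ x ∈ WordSet R, x⁻¹ ∈ WordSet R)

lemma mem_wordPairSubgroup_iff {p : G × G} :
    p ∈ wordPairSubgroup hLne hRne hL hR ↔ ∃ n, IsWord L n p.1 ∧ IsWord R n p.2 := by
  constructor
  · rintro ⟨n, -, hu, hv⟩
    exact ⟨n, hu, hv⟩
  · obtain ⟨u, v⟩ := p
    rintro ⟨_ | n, hu, hv⟩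
    · obtain rfl : u = 1 := isWord_zero_iff.1 hu
      obtain rfl : v = 1 := isWord_zero_iff.1 hv
      exact one_mem _
    · exact ⟨n + 1, n.succ_pos, hu, hv⟩

lemma dPath_iff_exists_mem_wordPairSubgroup {g h : G} :
    DPath L R g h ↔ ∃ p ∈ wordPairSubgroup hLne hRne hL hR, h = p.1⁻¹ * g * p.2 := by
  simp only [dPath_iff_exists_isWord, mem_wordPairSubgroup_iff, Prod.exists]
  grind

lemma strongConn_iff_exists_mem_wordPairSubgroup {g h : G} :
    StrongConn L R g h ↔ ∃ p ∈ wordPairSubgroup hLne hRne hL hR, h = p.1⁻¹ * g * p.2 := by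
  rw [← dPath_iff_exists_mem_wordPairSubgroup]
  refine ⟨And.left, fun hgh => ⟨hgh, ?_⟩⟩
  obtain ⟨p, hp, rfl⟩ := (dPath_iff_exists_mem_wordPairSubgroup hLne hRne hL hR).1 hgh
  exact (dPath_iff_exists_mem_wordPairSubgroup hLne hRne hL hR).2
    ⟨p⁻¹, inv_mem hp, by simp [mul_assoc]⟩

end WordPairs

end

theorem stmt_14 {G : Type*} [Group G] (L R : Set G) (hL : L.Nonempty) (hR : R.Nonempty)
    (hWL : ∃ H : Subgroup G, WordSet L = (H : Set G))
    (hWR : ∃ H : Subgroup G, WordSet R = (H : Set G))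
    (U : Set (G × G))
    (hU : U = {p : G × G | ∃ n : ℕ, 0 < n ∧ IsWord L n p.1 ∧ IsWord R n p.2}) :
    (∃ H : Subgroup (G × G), U = (H : Set (G × G))) ∧
    (∀ g : G, ∀ p q : G × G, (p.1 * q.1)⁻¹ * g * (p.2 * q.2) =
        q.1⁻¹ * (p.1⁻¹ * g * p.2) * q.2) ∧
    (∀ g : G, ((1 : G), (1 : G)).1⁻¹ * g * ((1 : G), (1 : G)).2 = g) ∧
    (∀ g h : G, (∃ p ∈ U, h = p.1⁻¹ * g * p.2) ↔ StrongConn L R g h) := by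
  have hWL' := inv_mem_wordSet_of_eq_subgroup hWL
  have hWR' := inv_mem_wordSet_of_eq_subgroup hWR
  subst hU
  refine ⟨⟨wordPairSubgroup hL hR hWL' hWR', rfl⟩, fun _ _ _ => by group, fun _ => by group,
    fun g h => ?_⟩
  rw [strongConn_iff_exists_mem_wordPairSubgroup hL hR hWL' hWR']
  rfl
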